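/- arXiv:1904.01082 — 3 statements merged into one kernel-verified Lean document; each statement's English description precedes it below -/
import Mathlib

section
/- Let D ∈ 𝕋^{n×n} be the weighted adjacency matrix of a directed graph Γ on n nodes. Then Γ has a negative cycle if and only if some diagonal entry of the tropical power (I ⊕ D)^{⊙n} is negative. -/
/-!
A closed walk of length at most `k` through `u` is bounded below by the diagonal entry
`((I ⊕ D)^{⊙k})_{uu}`, and conversely every entry of `(I ⊕ D)^{⊙k}` is attained by a walk, since
the identity summand lets a walk stay put. So a negative diagonal entry yields a negative cycle.
For the other direction, a negative closed walk longer than `n` repeats a node; cutting it there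
splits it into two shorter closed walks whose weights add up to the original one, so one of them
is negative. Hence a shortest negative closed walk has length at most `n`, and since the diagonal
entries of the powers of `I ⊕ D` decrease with the exponent, `((I ⊕ D)^{⊙n})_{uu} < 0`.
-/

open Tropical

/-- The total weight (in `𝕋 = ℝ ∪ {∞}`, modelled as `WithTop ℝ`) of the walk that starts
at `u` and successively visits the nodes in the list `l`. -/
noncomputable def walkWeight {n : ℕ} (D : Matrix (Fin n) (Fin n) (WithTop ℝ)) :
    Fin n → List (Fin n) → WithTop ℝ
  | _, [] => 0
  | u, w :: l => D u w + walkWeight D w l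

theorem List.exists_eq_append_cons_append_cons_of_not_nodup {α : Type*} {l : List α}
    (h : ¬ l.Nodup) : ∃ a b c : List α, ∃ x : α, l = a ++ x :: (b ++ x :: c) := by
  induction l with
  | nil => exact absurd List.nodup_nil h
  | cons y l ih =>
    by_cases hy : y ∈ l
    · obtain ⟨b, c, rfl⟩ := List.append_of_mem hy
      exact ⟨[], b, c, y, rfl⟩
    · obtain ⟨a, b, c, x, rfl⟩ := ih fun hl => h (List.nodup_cons.2 ⟨hy, hl⟩)
      exact ⟨y :: a, b, c, x, rfl⟩

section TropicalMatrix

variable {ι κ μ R : Type*} [LinearOrderedAddCommMonoidWithTop R]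

theorem Matrix.untrop_mul_apply_le [Fintype κ] (B : Matrix ι κ (Tropical R))
    (C : Matrix κ μ (Tropical R)) (u : ι) (w : κ) (v : μ) :
    untrop ((B * C) u v) ≤ untrop (B u w) + untrop (C w v) := by
  rw [Matrix.mul_apply, Finset.untrop_sum', ← untrop_mul]
  exact Finset.inf_le (Finset.mem_univ w)

theorem Matrix.exists_untrop_mul_apply_eq [Fintype κ] [Nonempty κ] (B : Matrix ι κ (Tropical R))
    (C : Matrix κ μ (Tropical R)) (u : ι) (v : μ) :
    ∃ w, untrop ((B * C) u v) = untrop (B u w) + untrop (C w v) := by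
  obtain ⟨w, -, hw⟩ := Finset.exists_mem_eq_inf Finset.univ Finset.univ_nonempty
    (untrop ∘ fun w => B u w * C w v)
  exact ⟨w, by rw [Matrix.mul_apply, Finset.untrop_sum', hw, Function.comp_apply, untrop_mul]⟩

variable [DecidableEq ι]

theorem Matrix.untrop_one_add_apply_self_nonpos (D : Matrix ι ι (Tropical R)) (u : ι) :
    untrop ((1 + D) u u) ≤ 0 := by
  rw [Matrix.add_apply, untrop_add, Matrix.one_apply_eq, untrop_one]
  exact min_le_left _ _

theorem Matrix.untrop_one_add_apply_le (D : Matrix ι ι (Tropical R)) (u v : ι) :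
    untrop ((1 + D) u v) ≤ untrop (D u v) := by
  rw [Matrix.add_apply, untrop_add]
  exact min_le_right _ _

theorem Matrix.untrop_one_add_apply_eq_or (D : Matrix ι ι (Tropical R)) (u v : ι) :
    untrop ((1 + D) u v) = untrop (D u v) ∨ u = v ∧ untrop ((1 + D) u v) = 0 := by
  rw [Matrix.add_apply, untrop_add]
  by_cases huv : u = v
  · subst huv
    rw [Matrix.one_apply_eq, untrop_one]
    rcases min_choice 0 (untrop (D u u)) with h | h <;> simp [h]
  · rw [Matrix.one_apply_ne huv, untrop_zero, min_top_left]
    exact Or.inl rfl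

variable [Fintype ι]

theorem Matrix.untrop_pow_apply_self_nonpos {A : Matrix ι ι (Tropical R)}
    (hA : ∀ u, untrop (A u u) ≤ 0) (k : ℕ) (u : ι) : untrop ((A ^ k) u u) ≤ 0 := by
  induction k with
  | zero => rw [pow_zero, Matrix.one_apply_eq, untrop_one]
  | succ k ih =>
    rw [pow_succ]
    exact (untrop_mul_apply_le _ _ u u u).trans (add_nonpos ih (hA u))

theorem Matrix.untrop_pow_apply_self_le_of_le {A : Matrix ι ι (Tropical R)}
    (hA : ∀ u, untrop (A u u) ≤ 0) {k m : ℕ} (hkm : k ≤ m) (u : ι) :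
    untrop ((A ^ m) u u) ≤ untrop ((A ^ k) u u) := by
  rw [← Nat.add_sub_cancel' hkm, pow_add]
  exact (untrop_mul_apply_le _ _ u u u).trans
    (add_le_of_nonpos_right (untrop_pow_apply_self_nonpos hA _ u))

end TropicalMatrix

section Walks

variable {n : ℕ}

theorem walkWeight_append_cons (W : Matrix (Fin n) (Fin n) (WithTop ℝ)) (u x : Fin n)
    (a c : List (Fin n)) :
    walkWeight W u (a ++ x :: c) = walkWeight W u (a ++ [x]) + walkWeight W x c := by
  induction a generalizing u with
  | nil => simp [walkWeight]
  | cons w a ih => simp only [List.cons_append, walkWeight, ih, add_assoc]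

variable (D : Matrix (Fin n) (Fin n) (Tropical (WithTop ℝ)))

theorem untrop_pow_length_apply_le_walkWeight (u : Fin n) (l : List (Fin n)) :
    untrop (((1 + D) ^ l.length) u (l.getLastD u)) ≤
      walkWeight (fun a b => untrop (D a b)) u l := by
  induction l generalizing u with
  | nil => simp [walkWeight]
  | cons w l ih =>
    rw [List.length_cons, pow_succ', List.getLastD_cons]
    exact (Matrix.untrop_mul_apply_le _ _ u w _).trans
      (add_le_add (Matrix.untrop_one_add_apply_le D u w) (ih w))

theorem exists_walkWeight_le_untrop_pow_apply (k : ℕ) (u v : Fin n) :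
    ∃ l : List (Fin n), l.getLastD u = v ∧
      walkWeight (fun a b => untrop (D a b)) u l ≤ untrop (((1 + D) ^ k) u v) := by
  induction k generalizing u with
  | zero =>
    by_cases huv : u = v
    · subst huv
      exact ⟨[], rfl, by simp [walkWeight]⟩
    · refine ⟨[v], rfl, ?_⟩
      rw [pow_zero, Matrix.one_apply_ne huv, untrop_zero]
      exact le_top
  | succ k ih =>
    have : Nonempty (Fin n) := ⟨u⟩
    obtain ⟨w, hw⟩ := Matrix.exists_untrop_mul_apply_eq (1 + D) ((1 + D) ^ k) u v
    obtain ⟨l, hl, hwl⟩ := ih w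
    rw [pow_succ', hw]
    rcases Matrix.untrop_one_add_apply_eq_or D u w with hstep | ⟨rfl, hstay⟩
    · exact ⟨w :: l, by rwa [List.getLastD_cons], by
        rw [hstep]; exact add_le_add le_rfl hwl⟩
    · exact ⟨l, hl, by rw [hstay, zero_add]; exact hwl⟩

def IsNegativeClosedWalk (W : Matrix (Fin n) (Fin n) (WithTop ℝ)) (u : Fin n)
    (l : List (Fin n)) : Prop :=
  l ≠ [] ∧ l.getLast? = some u ∧ walkWeight W u l < 0

theorem IsNegativeClosedWalk.split {W : Matrix (Fin n) (Fin n) (WithTop ℝ)} {u x : Fin n}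
    {a b c : List (Fin n)} (h : IsNegativeClosedWalk W u (a ++ x :: (b ++ x :: c))) :
    IsNegativeClosedWalk W u (a ++ x :: c) ∨ IsNegativeClosedWalk W x (b ++ [x]) := by
  obtain ⟨-, hlast, hneg⟩ := h
  have hweight : walkWeight W u (a ++ x :: (b ++ x :: c)) =
      walkWeight W u (a ++ x :: c) + walkWeight W x (b ++ [x]) := by
    rw [walkWeight_append_cons, walkWeight_append_cons W x x b c, walkWeight_append_cons W u x a c]
    abel
  rw [hweight] at hneg
  rcases lt_or_ge (walkWeight W u (a ++ x :: c)) 0 with houter | houter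
  · exact Or.inl ⟨by simp, by simpa [List.getLast?_append, List.getLast?_cons] using hlast, houter⟩
  · refine Or.inr ⟨by simp, by simp, ?_⟩
    by_contra! hinner
    exact (add_nonneg houter hinner).not_gt hneg

theorem IsNegativeClosedWalk.exists_length_le {W : Matrix (Fin n) (Fin n) (WithTop ℝ)}
    {u : Fin n} {l : List (Fin n)} (h : IsNegativeClosedWalk W u l) :
    ∃ v l', IsNegativeClosedWalk W v l' ∧ l'.length ≤ n := by
  classical
  have hex : ∃ k, ∃ v l', IsNegativeClosedWalk W v l' ∧ l'.length = k := ⟨_, u, l, h, rfl⟩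
  obtain ⟨v, l', hl', hlen⟩ := Nat.find_spec hex
  refine ⟨v, l', hl', hlen ▸ ?_⟩
  by_contra! hlong
  obtain ⟨a, b, c, x, rfl⟩ := List.exists_eq_append_cons_append_cons_of_not_nodup
    fun hnodup => (hnodup.length_le_card.trans_eq (Fintype.card_fin n)).not_gt (hlen ▸ hlong)
  rcases hl'.split with hshort | hshort
  · exact Nat.find_min hex (by simp [← hlen]) ⟨_, _, hshort, rfl⟩
  · exact Nat.find_min hex (by simp [← hlen]; omega) ⟨_, _, hshort, rfl⟩

theorem IsNegativeClosedWalk.untrop_pow_apply_self_neg {u : Fin n} {l : List (Fin n)}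
    (h : IsNegativeClosedWalk (fun a b => untrop (D a b)) u l) {k : ℕ} (hk : l.length ≤ k) :
    untrop (((1 + D) ^ k) u u) < 0 := by
  obtain ⟨-, hlast, hneg⟩ := h
  have hend : l.getLastD u = u := by simp [hlast]
  calc untrop (((1 + D) ^ k) u u) ≤ untrop (((1 + D) ^ l.length) u u) :=
        Matrix.untrop_pow_apply_self_le_of_le (Matrix.untrop_one_add_apply_self_nonpos D) hk u
    _ ≤ walkWeight (fun a b => untrop (D a b)) u l := by
        simpa only [hend] using untrop_pow_length_apply_le_walkWeight D u l
    _ < 0 := hneg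

theorem exists_isNegativeClosedWalk_of_untrop_pow_apply_self_neg {k : ℕ} {u : Fin n}
    (h : untrop (((1 + D) ^ k) u u) < 0) :
    ∃ l, IsNegativeClosedWalk (fun a b => untrop (D a b)) u l := by
  obtain ⟨l, hend, hle⟩ := exists_walkWeight_le_untrop_pow_apply D k u u
  have hneg := hle.trans_lt h
  have hne : l ≠ [] := by
    rintro rfl
    simp [walkWeight] at hneg
  exact ⟨l, hne, by simpa [List.getLast?_eq_some_getLast hne] using hend, hneg⟩

end Walks

/-- the graph with weighted adjacency matrix `D` has a negative cycle
(a nonempty closed walk of negative total weight) if and only if some diagonal entry of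
the tropical power `(I ⊕ D)^{⊙n}` is negative. -/
theorem negative_cycle_iff_negative_diagonal {n : ℕ}
    (D : Matrix (Fin n) (Fin n) (Tropical (WithTop ℝ))) :
    (∃ (u : Fin n) (l : List (Fin n)), l ≠ [] ∧ l.getLast? = some u ∧
        walkWeight (fun a b => Tropical.untrop (D a b)) u l < 0) ↔
      ∃ u : Fin n, Tropical.untrop (((1 + D) ^ n) u u) < 0 := by
  constructor
  · rintro ⟨u, l, hl⟩
    obtain ⟨v, l', hl', hlen⟩ := IsNegativeClosedWalk.exists_length_le hl
    exact ⟨v, hl'.untrop_pow_apply_self_neg D hlen⟩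
  · rintro ⟨u, hu⟩
    obtain ⟨l, hl⟩ := exists_isNegativeClosedWalk_of_untrop_pow_apply_self_neg D hu
    exact ⟨u, l, hl⟩
end

section
/- Let D ∈ 𝕋[x₁,…,x_k]^{n×n} be the weighted adjacency matrix of a directed graph with n nodes and m arcs, nonnegative weights, which is generic and has separated variables, and let t be a node. Then the number κ = κ(D,t) of shortest-path trees with target node t satisfies κ ≤ min( Φ(n,k), n^{n−2}, C(m, n−1) ), where Φ(n,k) = Σ_{i=0}^{k} C(k,i) · (i+1)^{n−i−1} and C(·,·) denotes binomial coefficients. -/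
/-- An entry of a parameterized weighted adjacency matrix: `none` is `∞` (no arc),
`some (c, none)` is the constant weight `c`, `some (c, some i)` is the weight `c + x_i`. -/
abbrev Entry (k : ℕ) := Option (ℝ × Option (Fin k))

/-- Evaluation of an entry at a parameter vector. -/
noncomputable def entryEval {k : ℕ} (e : Entry k) (x : Fin k → ℝ) : ℝ :=
  match e with
  | none => 0
  | some (c, none) => c
  | some (c, some i) => c + x i

/-- Pointwise `≤` on the parameter domain described by `P`. -/
def leOn {k : ℕ} (P : (Fin k → ℝ) → Prop) (f g : (Fin k → ℝ) → ℝ) : Prop :=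
  ∀ x, P x → f x ≤ g x

/-- Strict pointwise `<` (i.e. `≤` and not `≥`) on the parameter domain `P`. -/
def ltOn {k : ℕ} (P : (Fin k → ℝ) → Prop) (f g : (Fin k → ℝ) → ℝ) : Prop :=
  leOn P f g ∧ ¬ leOn P g f

/-- `par` encodes a shortest-path tree toward `t`. -/
def IsSPT {n k : ℕ} (E : Fin n → Fin n → Entry k) (P : (Fin k → ℝ) → Prop)
    (t : Fin n) (par : Fin n → Fin n) : Prop :=
  par t = t ∧ (∀ v, ∃ m : ℕ, par^[m] v = t) ∧
  (∀ v, v ≠ t → (E v (par v)).isSome) ∧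
  ∃ p : Fin n → (Fin k → ℝ) → ℝ,
    p t = (fun _ => 0) ∧
    (∀ v, v ≠ t → p v = fun x => entryEval (E v (par v)) x + p (par v) x) ∧
    (∀ v w : Fin n, (E v w).isSome →
      ¬ ltOn P (fun x => entryEval (E v w) x + p w x) (p v))

/-- `D` has separated variables: each indeterminate occurs in at most one entry. -/
def SeparatedVars {n k : ℕ} (E : Fin n → Fin n → Entry k) : Prop :=
  ∀ (i : Fin k) (u v u' v' : Fin n) (c c' : ℝ),
    E u v = some (c, some i) → E u' v' = some (c', some i) → u = u' ∧ v = v'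

/-- The matrix is generic: no two distinct collections of arcs have the same sum of
weights (as functions on the parameter domain `P`). -/
def Generic {n k : ℕ} (E : Fin n → Fin n → Entry k) (P : (Fin k → ℝ) → Prop) : Prop :=
  ∀ A B : Finset (Fin n × Fin n),
    (∀ a ∈ A, (E a.1 a.2).isSome) → (∀ b ∈ B, (E b.1 b.2).isSome) → A ≠ B →
    ∃ x, P x ∧ ∑ a ∈ A, entryEval (E a.1 a.2) x ≠ ∑ b ∈ B, entryEval (E b.1 b.2) x

/-! The bound `C(m, n - 1)` holds because a tree is determined by its `n - 1` arcs, and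
`n ^ (n - 2)` because an in-tree is determined by its Prüfer code (repeatedly delete the least
leaf and record its parent).

For `Φ(n, k)`, label every vertex by the first variable on its tree path to `t`. With separated
variables this label determines all further variables on the path, so two shortest-path trees
with the same labelling have potentials that differ by a constant `δ v` at each vertex. The
shortest-path condition of one tree along the arcs of the other keeps `δ` from decreasing toward
`t`, where it vanishes; by symmetry `δ = 0`, and genericity then identifies the tree paths. A
labelling fixes `t` and, for each of the `i` variables it uses, the tail of that variable's arc,
and assigns one of `i + 1` values to every other vertex: at most `C(k, i) (i + 1) ^ (n - i - 1)`
labellings use `i` variables.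
-/

namespace InTree

variable {α : Type*} {par : α → α} {t : α}

theorem parent_induction (hreach : ∀ v, ∃ m, par^[m] v = t) {C : α → Prop} (root : C t)
    (step : ∀ v, v ≠ t → C (par v) → C v) (v : α) : C v := by
  obtain ⟨m, hm⟩ := hreach v
  induction m generalizing v with
  | zero =>
    obtain rfl : v = t := hm
    exact root
  | succ m ih =>
    by_cases hv : v = t
    · exact hv ▸ root
    · exact step v hv (ih (par v) hm)

/-- `0` when `v` never reaches `t`. -/
noncomputable def depth (par : α → α) (t v : α) : ℕ := sInf {m | par^[m] v = t}

theorem depth_root : depth par t t = 0 := Nat.sInf_eq_zero.2 (Or.inl rfl)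

theorem iterate_depth (hreach : ∀ v, ∃ m, par^[m] v = t) (v : α) :
    par^[depth par t v] v = t :=
  Nat.sInf_mem (hreach v)

theorem depth_eq_depth_add_one (hreach : ∀ v, ∃ m, par^[m] v = t) {v : α} (hv : v ≠ t) :
    depth par t v = depth par t (par v) + 1 := by
  apply le_antisymm
  · exact Nat.sInf_le (iterate_depth hreach (par v))
  · obtain ⟨d, hd⟩ := Nat.exists_eq_add_one_of_ne_zero (n := depth par t v) fun h => hv (by
      simpa [h] using iterate_depth hreach v)
    have hd' : par^[d] (par v) = t := by
      rw [← Function.iterate_succ_apply, Nat.succ_eq_add_one, ← hd, iterate_depth hreach]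
    rw [hd]
    exact Nat.succ_le_succ (Nat.sInf_le hd')

noncomputable def path (par : α → α) (t v : α) : List (α × α) :=
  (List.range (depth par t v)).map fun i => (par^[i] v, par^[i + 1] v)

theorem path_root : path par t t = [] := by simp [path, depth_root]

theorem path_of_ne (hreach : ∀ v, ∃ m, par^[m] v = t) {v : α} (hv : v ≠ t) :
    path par t v = (v, par v) :: path par t (par v) := by
  rw [path, depth_eq_depth_add_one hreach hv, List.range_succ_eq_map]
  simp [path, Function.iterate_succ_apply]

theorem fst_ne_root_of_mem_path {v : α} {a : α × α} (ha : a ∈ path par t v) : a.1 ≠ t := by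
  obtain ⟨i, hi, rfl⟩ := List.mem_map.1 ha
  exact Nat.notMem_of_lt_sInf (List.mem_range.1 hi)

theorem snd_eq_of_mem_path {v : α} {a : α × α} (ha : a ∈ path par t v) : a.2 = par a.1 := by
  obtain ⟨i, -, rfl⟩ := List.mem_map.1 ha
  exact Function.iterate_succ_apply' par i v

theorem depth_fst_le_of_mem_path (hreach : ∀ v, ∃ m, par^[m] v = t) :
    ∀ v, ∀ a ∈ path par t v, depth par t a.1 ≤ depth par t v := by
  refine parent_induction hreach (by simp [path_root]) fun v hv ih a ha => ?_
  rw [path_of_ne hreach hv, List.mem_cons] at ha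
  rw [depth_eq_depth_add_one hreach hv]
  rcases ha with rfl | ha
  · exact (depth_eq_depth_add_one hreach hv).le
  · exact (ih a ha).trans (Nat.le_succ _)

theorem path_nodup (hreach : ∀ v, ∃ m, par^[m] v = t) : ∀ v, (path par t v).Nodup := by
  refine parent_induction hreach (by simp [path_root]) fun v hv ih => ?_
  rw [path_of_ne hreach hv]
  refine List.nodup_cons.2 ⟨fun h => ?_, ih⟩
  have := depth_fst_le_of_mem_path hreach _ _ h
  dsimp only at this
  rw [depth_eq_depth_add_one hreach hv] at this
  omega

structure IsSubtree (par : α → α) (t : α) (s : Finset α) : Prop where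
  root_fixed : par t = t
  reach : ∀ v, ∃ m, par^[m] v = t
  root_mem : t ∈ s
  mapsTo : ∀ v ∈ s, par v ∈ s

theorem root_mem_image [DecidableEq α] (hreach : ∀ v, ∃ m, par^[m] v = t) {s : Finset α}
    (hs : ∀ v ∈ s, par v ∈ s) :
    ∀ u, u ∈ s → u ≠ t → t ∈ (s.erase t).image par := by
  refine parent_induction hreach (fun _ h => absurd rfl h) fun v hv ih hvs _ => ?_
  by_cases hpv : par v = t
  · exact Finset.mem_image.2 ⟨v, Finset.mem_erase.2 ⟨hv, hvs⟩, hpv⟩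
  · exact ih (hs v hvs) hpv

namespace IsSubtree

variable {s : Finset α}

theorem root_mem_image_of_two_le [DecidableEq α] (h : IsSubtree par t s) (h2 : 2 ≤ s.card) :
    t ∈ (s.erase t).image par := by
  obtain ⟨u, hu, hut⟩ := Finset.exists_mem_ne h2 t
  exact root_mem_image h.reach h.mapsTo u hu hut

theorem parent_eq_root [DecidableEq α] (h : IsSubtree par t s) (hc : s.card ≤ 2) {v : α}
    (hv : v ∈ s) : par v = t := by
  by_contra hne
  have hvt : v ≠ t := fun he => hne (he ▸ h.root_fixed)
  have hpv : par v ≠ v := fun he => hvt <| by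
    obtain ⟨m, hm⟩ := h.reach v
    rwa [Function.iterate_fixed he] at hm
  have hsub : ({t, v, par v} : Finset α) ⊆ s := by
    simp only [Finset.insert_subset_iff, Finset.singleton_subset_iff]
    exact ⟨h.root_mem, hv, h.mapsTo v hv⟩
  have h3 := Finset.card_eq_three.2 ⟨t, v, par v, Ne.symm hvt, Ne.symm hne, Ne.symm hpv, rfl⟩
  have := Finset.card_le_card hsub
  omega

end IsSubtree

section Prufer

variable [LinearOrder α]

def leaves (par : α → α) (t : α) (s : Finset α) : Finset α := s \ (s.erase t).image par

/-- The junk value `t` is never used: a set containing `t` has a leaf. -/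
def minLeaf (par : α → α) (t : α) (s : Finset α) : α :=
  if h : (leaves par t s).Nonempty then (leaves par t s).min' h else t

variable {s : Finset α}

theorem leaves_nonempty (ht : t ∈ s) : (leaves par t s).Nonempty := by
  rw [leaves, Finset.sdiff_nonempty]
  intro hsub
  have := (Finset.card_le_card hsub).trans Finset.card_image_le
  rw [Finset.card_erase_of_mem ht] at this
  have := Finset.card_pos.2 ⟨t, ht⟩
  omega

theorem minLeaf_mem_leaves (ht : t ∈ s) : minLeaf par t s ∈ leaves par t s := by
  rw [minLeaf, dif_pos (leaves_nonempty ht)]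
  exact Finset.min'_mem _ _

theorem minLeaf_mem (ht : t ∈ s) : minLeaf par t s ∈ s :=
  (Finset.mem_sdiff.1 (minLeaf_mem_leaves ht)).1

theorem minLeaf_notMem_image (ht : t ∈ s) : minLeaf par t s ∉ (s.erase t).image par :=
  (Finset.mem_sdiff.1 (minLeaf_mem_leaves ht)).2

theorem IsSubtree.minLeaf_ne_root (h : IsSubtree par t s) (h2 : 2 ≤ s.card) :
    minLeaf par t s ≠ t :=
  fun he => minLeaf_notMem_image h.root_mem (by rw [he]; exact h.root_mem_image_of_two_le h2)

theorem IsSubtree.erase_minLeaf (h : IsSubtree par t s) (h2 : 2 ≤ s.card) :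
    IsSubtree par t (s.erase (minLeaf par t s)) where
  root_fixed := h.root_fixed
  reach := h.reach
  root_mem := Finset.mem_erase.2 ⟨(h.minLeaf_ne_root h2).symm, h.root_mem⟩
  mapsTo v hv := by
    have hvs := Finset.mem_of_mem_erase hv
    refine Finset.mem_erase.2 ⟨fun he => ?_, h.mapsTo v hvs⟩
    by_cases hvt : v = t
    · rw [hvt, h.root_fixed] at he
      exact h.minLeaf_ne_root h2 he.symm
    · exact minLeaf_notMem_image h.root_mem
        (he ▸ Finset.mem_image_of_mem par (Finset.mem_erase.2 ⟨hvt, hvs⟩))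

def pruferCode (par : α → α) (t : α) (s : Finset α) : List α :=
  if _h : 3 ≤ s.card ∧ t ∈ s then
    par (minLeaf par t s) :: pruferCode par t (s.erase (minLeaf par t s))
  else []
termination_by s.card
decreasing_by exact Finset.card_erase_lt_of_mem (minLeaf_mem _h.2)

theorem pruferCode_of_lt (h : s.card < 3) : pruferCode par t s = [] := by
  rw [pruferCode, dif_neg fun h' => by omega]

theorem pruferCode_of_le (h3 : 3 ≤ s.card) (ht : t ∈ s) :
    pruferCode par t s =
      par (minLeaf par t s) :: pruferCode par t (s.erase (minLeaf par t s)) := by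
  rw [pruferCode, dif_pos ⟨h3, ht⟩]

theorem length_pruferCode (h : IsSubtree par t s) : (pruferCode par t s).length = s.card - 2 := by
  induction s using Finset.strongInduction with
  | H s ih =>
  by_cases h3 : 3 ≤ s.card
  · have hm := minLeaf_mem (par := par) h.root_mem
    rw [pruferCode_of_le h3 h.root_mem, List.length_cons,
      ih _ (Finset.erase_ssubset hm) (h.erase_minLeaf (by omega)), Finset.card_erase_of_mem hm]
    omega
  · rw [pruferCode_of_lt (by omega), List.length_nil]
    omega

theorem image_eq_insert_pruferCode (h : IsSubtree par t s) (h2 : 2 ≤ s.card) :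
    (s.erase t).image par = insert t (pruferCode par t s).toFinset := by
  induction s using Finset.strongInduction with
  | H s ih =>
  by_cases h3 : 3 ≤ s.card
  · have hm := minLeaf_mem (par := par) h.root_mem
    rw [pruferCode_of_le h3 h.root_mem, List.toFinset_cons, Finset.insert_comm,
      ← ih _ (Finset.erase_ssubset hm) (h.erase_minLeaf h2)
        (by rw [Finset.card_erase_of_mem hm]; omega),
      Finset.erase_right_comm, ← Finset.image_insert,
      Finset.insert_erase (Finset.mem_erase.2 ⟨h.minLeaf_ne_root h2, hm⟩)]
  · rw [pruferCode_of_lt (by omega), List.toFinset_nil, insert_empty_eq]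
    refine subset_antisymm (fun x hx => ?_) (Finset.singleton_subset_iff.2
      (h.root_mem_image_of_two_le h2))
    obtain ⟨u, hu, rfl⟩ := Finset.mem_image.1 hx
    exact Finset.mem_singleton.2 (h.parent_eq_root (by omega) (Finset.mem_of_mem_erase hu))

theorem eqOn_of_pruferCode_eq {par₁ par₂ : α → α} (h₁ : IsSubtree par₁ t s)
    (h₂ : IsSubtree par₂ t s) (hcode : pruferCode par₁ t s = pruferCode par₂ t s) :
    ∀ v ∈ s, par₁ v = par₂ v := by
  induction s using Finset.strongInduction with
  | H s ih =>
  by_cases h3 : 3 ≤ s.card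
  · have hleaf : minLeaf par₁ t s = minLeaf par₂ t s := by
      have himg : (s.erase t).image par₁ = (s.erase t).image par₂ := by
        rw [image_eq_insert_pruferCode h₁ (by omega), image_eq_insert_pruferCode h₂ (by omega),
          hcode]
      rw [minLeaf, minLeaf, leaves, leaves, himg]
    rw [pruferCode_of_le h3 h₁.root_mem, pruferCode_of_le h3 h₂.root_mem, hleaf,
      List.cons_eq_cons] at hcode
    intro v hv
    by_cases hvℓ : v = minLeaf par₂ t s
    · exact hvℓ ▸ hcode.1
    · exact ih _ (Finset.erase_ssubset (minLeaf_mem h₂.root_mem))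
        (hleaf ▸ h₁.erase_minLeaf (by omega)) (h₂.erase_minLeaf (by omega)) hcode.2 v
        (Finset.mem_erase.2 ⟨hvℓ, hv⟩)
  · intro v hv
    rw [h₁.parent_eq_root (by omega) hv, h₂.parent_eq_root (by omega) hv]

theorem ncard_le_card_pow [Fintype α] (t : α) :
    {par : α → α | par t = t ∧ ∀ v, ∃ m, par^[m] v = t}.ncard ≤
      Fintype.card α ^ (Fintype.card α - 2) := by
  have hsub : ∀ par ∈ {par : α → α | par t = t ∧ ∀ v, ∃ m, par^[m] v = t},
      IsSubtree par t Finset.univ :=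
    fun par h => ⟨h.1, h.2, Finset.mem_univ t, fun v _ => Finset.mem_univ (par v)⟩
  calc _ ≤ {l : List α | l.length = Fintype.card α - 2}.ncard :=
        Set.ncard_le_ncard_of_injOn (pruferCode · t Finset.univ)
          (fun par h => by simpa using length_pruferCode (hsub par h))
          (fun par₁ h₁ par₂ h₂ he => funext fun v =>
            eqOn_of_pruferCode_eq (hsub par₁ h₁) (hsub par₂ h₂) he v (Finset.mem_univ v))
          (Set.finite_coe_iff.1 (inferInstanceAs (Finite (List.Vector α _))))
    _ = Fintype.card α ^ (Fintype.card α - 2) :=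
      (Nat.card_eq_fintype_card (α := List.Vector α _)).trans (card_vector _)

end Prufer

section TreeArcs

variable [Fintype α] [DecidableEq α]

def treeArcs (par : α → α) (t : α) : Finset (α × α) :=
  (Finset.univ.erase t).image fun v => (v, par v)

theorem card_treeArcs : (treeArcs par t).card = Fintype.card α - 1 := by
  rw [treeArcs, Finset.card_image_of_injective _ fun _ _ h => congrArg Prod.fst h,
    Finset.card_erase_of_mem (Finset.mem_univ t), Finset.card_univ]

theorem eq_of_treeArcs_eq {par₁ par₂ : α → α} (h₁ : par₁ t = t) (h₂ : par₂ t = t)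
    (h : treeArcs par₁ t = treeArcs par₂ t) : par₁ = par₂ := by
  funext v
  by_cases hv : v = t
  · rw [hv, h₁, h₂]
  · have : (v, par₁ v) ∈ treeArcs par₂ t :=
      h ▸ Finset.mem_image_of_mem _ (Finset.mem_erase.2 ⟨hv, Finset.mem_univ v⟩)
    obtain ⟨u, -, hu⟩ := Finset.mem_image.1 this
    simp only [Prod.mk.injEq] at hu
    obtain ⟨rfl, hu⟩ := hu
    exact hu.symm

end TreeArcs

end InTree

section Weights

variable {n k : ℕ} (E : Fin n → Fin n → Entry k)

def arcConst (a : Fin n × Fin n) : ℝ := ((E a.1 a.2).map Prod.fst).getD 0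

def arcVar (a : Fin n × Fin n) : Option (Fin k) := (E a.1 a.2).bind Prod.snd

theorem arcVar_eq_some_iff {a : Fin n × Fin n} {j : Fin k} :
    arcVar E a = some j ↔ ∃ c, E a.1 a.2 = some (c, some j) := by
  rcases h : E a.1 a.2 with _ | ⟨c, _ | j'⟩ <;> simp [arcVar, h]

theorem entryEval_eq_arcConst_add (a : Fin n × Fin n) (x : Fin k → ℝ) :
    entryEval (E a.1 a.2) x = arcConst E a + ((arcVar E a).toList.map x).sum := by
  rcases h : E a.1 a.2 with _ | ⟨c, _ | j⟩ <;> simp [entryEval, arcConst, arcVar, h]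

theorem sum_entryEval_eq (L : List (Fin n × Fin n)) (x : Fin k → ℝ) :
    (L.map fun a => entryEval (E a.1 a.2) x).sum =
      (L.map (arcConst E)).sum + ((L.filterMap (arcVar E)).map x).sum := by
  induction L with
  | nil => simp
  | cons a L ih =>
    rw [List.map_cons, List.sum_cons, ih, entryEval_eq_arcConst_add, List.filterMap_cons]
    cases arcVar E a <;> simp <;> ring

variable (par : Fin n → Fin n) (t : Fin n)

noncomputable def pathWeight (v : Fin n) (x : Fin k → ℝ) : ℝ :=
  ((InTree.path par t v).map fun a => entryEval (E a.1 a.2) x).sum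

noncomputable def pathConst (v : Fin n) : ℝ := ((InTree.path par t v).map (arcConst E)).sum

noncomputable def pathVars (v : Fin n) : List (Fin k) :=
  (InTree.path par t v).filterMap (arcVar E)

noncomputable def firstVar (v : Fin n) : Option (Fin k) := (pathVars E par t v).head?

theorem pathWeight_eq (v : Fin n) (x : Fin k → ℝ) :
    pathWeight E par t v x = pathConst E par t v + ((pathVars E par t v).map x).sum :=
  sum_entryEval_eq E _ x

variable {E par t}

theorem pathWeight_root : pathWeight E par t t = fun _ => 0 := by
  funext x
  simp [pathWeight, InTree.path_root]

theorem pathConst_root : pathConst E par t t = 0 := by simp [pathConst, InTree.path_root]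

theorem firstVar_root : firstVar E par t t = none := by
  simp [firstVar, pathVars, InTree.path_root]

theorem pathWeight_of_ne (hreach : ∀ v, ∃ m, par^[m] v = t) {v : Fin n} (hv : v ≠ t) :
    pathWeight E par t v = fun x => entryEval (E v (par v)) x + pathWeight E par t (par v) x := by
  funext x
  rw [pathWeight, InTree.path_of_ne hreach hv, List.map_cons, List.sum_cons, pathWeight]

theorem pathVars_of_ne (hreach : ∀ v, ∃ m, par^[m] v = t) {v : Fin n} (hv : v ≠ t) :
    pathVars E par t v = (arcVar E (v, par v)).toList ++ pathVars E par t (par v) := by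
  rw [pathVars, InTree.path_of_ne hreach hv, List.filterMap_cons]
  cases arcVar E (v, par v) <;> rfl

theorem sum_toFinset_path (hreach : ∀ v, ∃ m, par^[m] v = t) (v : Fin n) (x : Fin k → ℝ) :
    ∑ a ∈ (InTree.path par t v).toFinset, entryEval (E a.1 a.2) x = pathWeight E par t v x :=
  List.sum_toFinset _ (InTree.path_nodup hreach v)

end Weights

section Labelings

open Finset

variable {α β : Type*} [Fintype α] [Fintype β] [DecidableEq β]

def usedLabels (f : α → Option β) : Finset β := {j | ∃ v, f v = some j}

theorem mem_usedLabels {f : α → Option β} {j : β} :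
    j ∈ usedLabels f ↔ ∃ v, f v = some j := by
  simp [usedLabels]

variable [DecidableEq α]

def admissibleLabelings (t : α) (tail : β → α) : Finset (α → Option β) :=
  {f | f t = none ∧ ∀ v j, f v = some j → tail j ≠ t ∧ f (tail j) = some j}

variable {t : α} {tail : β → α} {f f₀ : α → Option β}

theorem mem_admissibleLabelings :
    f ∈ admissibleLabelings t tail ↔
      f t = none ∧ ∀ v j, f v = some j → tail j ≠ t ∧ f (tail j) = some j := by
  simp [admissibleLabelings]

theorem card_insert_image_usedLabels (hf₀ : f₀ ∈ admissibleLabelings t tail) :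
    #(insert t ((usedLabels f₀).image tail)) = #(usedLabels f₀) + 1 := by
  obtain ⟨-, hf₀tail⟩ := mem_admissibleLabelings.1 hf₀
  rw [card_insert_of_notMem, card_image_of_injOn]
  · intro j hj j' hj' hjj'
    obtain ⟨v, hv⟩ := mem_usedLabels.1 hj
    obtain ⟨v', hv'⟩ := mem_usedLabels.1 hj'
    have h := (hf₀tail v j hv).2
    rw [show tail j = tail j' from hjj', (hf₀tail v' j' hv').2] at h
    exact (Option.some_injective _ h).symm
  · simp only [mem_image, not_exists, not_and]
    intro j hj
    obtain ⟨v, hv⟩ := mem_usedLabels.1 hj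
    exact (hf₀tail v j hv).1

theorem filter_usedLabels_eq_subset_piFinset (hf₀ : f₀ ∈ admissibleLabelings t tail) :
    {f ∈ admissibleLabelings t tail | usedLabels f = usedLabels f₀} ⊆
      Fintype.piFinset fun v =>
        if v ∈ insert t ((usedLabels f₀).image tail) then {f₀ v}
        else insertNone (usedLabels f₀) := by
  obtain ⟨hf₀t, hf₀tail⟩ := mem_admissibleLabelings.1 hf₀
  intro f hf
  obtain ⟨hf, hI⟩ := mem_filter.1 hf
  obtain ⟨hft, hftail⟩ := mem_admissibleLabelings.1 hf
  refine Fintype.mem_piFinset.2 fun v => ?_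
  split_ifs with hv
  · rw [mem_singleton]
    rcases mem_insert.1 hv with rfl | hv
    · rw [hft, hf₀t]
    · obtain ⟨j, hj, rfl⟩ := mem_image.1 hv
      obtain ⟨u, hu⟩ := mem_usedLabels.1 hj
      obtain ⟨u', hu'⟩ := mem_usedLabels.1 (hI ▸ hj)
      rw [(hftail u' j hu').2, (hf₀tail u j hu).2]
  · exact mem_insertNone.2 fun j hj => hI ▸ mem_usedLabels.2 ⟨v, hj⟩

theorem card_filter_usedLabels_eq_le (t : α) (tail : β → α) (I : Finset β) :
    #{f ∈ admissibleLabelings t tail | usedLabels f = I} ≤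
      (#I + 1) ^ (Fintype.card α - #I - 1) := by
  obtain he | ⟨f₀, hf₀⟩ := eq_empty_or_nonempty
    {f ∈ admissibleLabelings t tail | usedLabels f = I}
  · simp [he]
  obtain ⟨hadm, rfl⟩ := mem_filter.1 hf₀
  refine (card_le_card (filter_usedLabels_eq_subset_piFinset hadm)).trans_eq ?_
  set T := insert t ((usedLabels f₀).image tail)
  calc
    _ = ∏ v, if v ∈ T then 1 else (#(usedLabels f₀) + 1) := by
      rw [Fintype.card_piFinset]
      exact prod_congr rfl fun v _ => by split_ifs <;> simp
    _ = _ := by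
      rw [prod_ite, prod_const_one, one_mul, prod_const, filter_notMem_eq_sdiff,
        card_univ_sdiff, card_insert_image_usedLabels hadm, Nat.sub_sub]

theorem card_admissibleLabelings_le (t : α) (tail : β → α) :
    #(admissibleLabelings t tail) ≤ ∑ i ∈ range (Fintype.card β + 1),
      (Fintype.card β).choose i * (i + 1) ^ (Fintype.card α - i - 1) := by
  rw [card_eq_sum_card_fiberwise (f := usedLabels) (t := univ.powerset)
    fun f _ => mem_powerset.2 (subset_univ _)]
  calc _ ≤ ∑ I ∈ univ.powerset, (#I + 1) ^ (Fintype.card α - #I - 1) :=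
        sum_le_sum fun I _ => card_filter_usedLabels_eq_le t tail I
    _ = _ := by
      rw [sum_powerset_apply_card fun i => (i + 1) ^ (Fintype.card α - i - 1), card_univ]
      simp only [smul_eq_mul]

end Labelings

section ShortestPathTrees

variable {n k : ℕ} {E : Fin n → Fin n → Entry k} {P : (Fin k → ℝ) → Prop} {t : Fin n}
  {par par₁ par₂ : Fin n → Fin n}

theorem Generic.eq_of_sum_eq (hgen : Generic E P) {A B : Finset (Fin n × Fin n)}
    (hA : ∀ a ∈ A, (E a.1 a.2).isSome) (hB : ∀ b ∈ B, (E b.1 b.2).isSome)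
    (h : ∀ x, P x →
      ∑ a ∈ A, entryEval (E a.1 a.2) x = ∑ b ∈ B, entryEval (E b.1 b.2) x) :
    A = B := by
  by_contra hne
  obtain ⟨x, hx, hsum⟩ := hgen A B hA hB hne
  exact hsum (h x hx)

theorem SeparatedVars.eq_of_arcVar_eq (hsep : SeparatedVars E) {a b : Fin n × Fin n} {j : Fin k}
    (ha : arcVar E a = some j) (hb : arcVar E b = some j) : a = b := by
  obtain ⟨c, hc⟩ := (arcVar_eq_some_iff E).1 ha
  obtain ⟨c', hc'⟩ := (arcVar_eq_some_iff E).1 hb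
  obtain ⟨h₁, h₂⟩ := hsep j _ _ _ _ _ _ hc hc'
  exact Prod.ext h₁ h₂

theorem SeparatedVars.exists_tail (hsep : SeparatedVars E) (t : Fin n) :
    ∃ tail : Fin k → Fin n, ∀ a j, arcVar E a = some j → tail j = a.1 := by
  classical
  refine ⟨fun j => if h : ∃ a, arcVar E a = some j then h.choose.1 else t, fun a j ha => ?_⟩
  have hex : ∃ a, arcVar E a = some j := ⟨a, ha⟩
  dsimp only
  rw [dif_pos hex, SeparatedVars.eq_of_arcVar_eq hsep hex.choose_spec ha]

theorem isSome_of_mem_path (hsome : ∀ v, v ≠ t → (E v (par v)).isSome) {v : Fin n}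
    {a : Fin n × Fin n} (ha : a ∈ InTree.path par t v) : (E a.1 a.2).isSome := by
  rw [InTree.snd_eq_of_mem_path ha]
  exact hsome _ (InTree.fst_ne_root_of_mem_path ha)

theorem IsSPT.not_ltOn_pathWeight (h : IsSPT E P t par) {v w : Fin n} (hvw : (E v w).isSome) :
    ¬ ltOn P (fun x => entryEval (E v w) x + pathWeight E par t w x) (pathWeight E par t v) := by
  obtain ⟨-, hreach, -, p, hp₀, hps, hopt⟩ := h
  have hp : ∀ v, p v = pathWeight E par t v :=
    InTree.parent_induction hreach (by rw [hp₀, pathWeight_root]) fun v hv ih => by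
      rw [hps v hv, pathWeight_of_ne hreach hv, ih]
  simpa only [hp] using hopt v w hvw

theorem pathVars_eq_cons_of_firstVar (hsep : SeparatedVars E) (hreach : ∀ v, ∃ m, par^[m] v = t)
    {j : Fin k} {b : Fin n × Fin n} (hb : arcVar E b = some j) :
    ∀ v, firstVar E par t v = some j → pathVars E par t v = j :: pathVars E par t b.2 := by
  refine InTree.parent_induction hreach (by simp [firstVar_root]) fun v hv ih hfirst => ?_
  rw [firstVar, pathVars_of_ne hreach hv] at hfirst
  rw [pathVars_of_ne hreach hv]
  cases hvar : arcVar E (v, par v) with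
  | none =>
    rw [hvar] at hfirst
    rw [Option.toList_none, List.nil_append] at hfirst ⊢
    exact ih hfirst
  | some j' =>
    rw [hvar] at hfirst
    obtain rfl : j' = j := by simpa using hfirst
    obtain rfl := SeparatedVars.eq_of_arcVar_eq hsep hvar hb
    rfl

theorem pathVars_eq_of_firstVar_eq (hsep : SeparatedVars E)
    (hreach₁ : ∀ v, ∃ m, par₁^[m] v = t) (hreach₂ : ∀ v, ∃ m, par₂^[m] v = t)
    (hfirst : firstVar E par₁ t = firstVar E par₂ t) (v : Fin n) :
    pathVars E par₁ t v = pathVars E par₂ t v := by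
  induction hL : (pathVars E par₁ t v).length using Nat.strong_induction_on generalizing v with
  | _ L ih =>
  cases h₁ : firstVar E par₁ t v with
  | none =>
    have h₂ : firstVar E par₂ t v = none := (congrFun hfirst v).symm.trans h₁
    rw [firstVar, List.head?_eq_none_iff] at h₁ h₂
    rw [h₁, h₂]
  | some j =>
    have h₂ : firstVar E par₂ t v = some j := (congrFun hfirst v).symm.trans h₁
    obtain ⟨b, -, hb⟩ := List.mem_filterMap.1 (List.mem_of_mem_head? h₁)
    have hcons := pathVars_eq_cons_of_firstVar hsep hreach₁ hb v h₁
    rw [hcons, pathVars_eq_cons_of_firstVar hsep hreach₂ hb v h₂,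
      ih _ (by rw [← hL, hcons, List.length_cons]; omega) b.2 rfl]

theorem pathConst_le_of_pathVars_eq (hP : ∃ x, P x) (h₁ : IsSPT E P t par₁)
    (hreach₂ : ∀ v, ∃ m, par₂^[m] v = t)
    (hsome₂ : ∀ v, v ≠ t → (E v (par₂ v)).isSome)
    (hvars : ∀ v, pathVars E par₁ t v = pathVars E par₂ t v) (v : Fin n) :
    pathConst E par₁ t v ≤ pathConst E par₂ t v := by
  suffices h : ∀ v, pathConst E par₁ t v - pathConst E par₂ t v ≤ 0 by linarith [h v]
  refine InTree.parent_induction hreach₂ (by simp [pathConst_root]) fun v hv ih => ?_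
  have hgap : ∀ x, pathWeight E par₁ t v x -
      (entryEval (E v (par₂ v)) x + pathWeight E par₁ t (par₂ v) x) =
      (pathConst E par₁ t v - pathConst E par₂ t v) -
        (pathConst E par₁ t (par₂ v) - pathConst E par₂ t (par₂ v)) := by
    intro x
    have h₂ := congrFun (pathWeight_of_ne (E := E) hreach₂ hv) x
    simp only [pathWeight_eq, hvars] at h₂ ⊢
    linarith
  by_contra hpos
  obtain ⟨x₀, hx₀⟩ := hP
  exact IsSPT.not_ltOn_pathWeight h₁ (hsome₂ v hv)
    ⟨fun x _ => by linarith [hgap x], fun hle => by linarith [hgap x₀, hle x₀ hx₀]⟩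

theorem eq_of_firstVar_eq (hsep : SeparatedVars E) (hgen : Generic E P) (hP : ∃ x, P x)
    (h₁ : IsSPT E P t par₁) (h₂ : IsSPT E P t par₂)
    (hfirst : firstVar E par₁ t = firstVar E par₂ t) : par₁ = par₂ := by
  have hvars := pathVars_eq_of_firstVar_eq hsep h₁.2.1 h₂.2.1 hfirst
  have hconst (v : Fin n) : pathConst E par₁ t v = pathConst E par₂ t v :=
    le_antisymm (pathConst_le_of_pathVars_eq hP h₁ h₂.2.1 h₂.2.2.1 hvars v)
      (pathConst_le_of_pathVars_eq hP h₂ h₁.2.1 h₁.2.2.1 (fun v => (hvars v).symm) v)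
  funext v
  by_cases hv : v = t
  · rw [hv, h₁.1, h₂.1]
  have harcs : (InTree.path par₁ t v).toFinset = (InTree.path par₂ t v).toFinset :=
    Generic.eq_of_sum_eq hgen (fun _ ha => isSome_of_mem_path h₁.2.2.1 (List.mem_toFinset.1 ha))
      (fun _ ha => isSome_of_mem_path h₂.2.2.1 (List.mem_toFinset.1 ha)) fun x _ => by
        rw [sum_toFinset_path h₁.2.1, sum_toFinset_path h₂.2.1, pathWeight_eq, pathWeight_eq,
          hvars, hconst]
  have hmem : (v, par₁ v) ∈ InTree.path par₂ t v := by
    rw [← List.mem_toFinset, ← harcs, List.mem_toFinset, InTree.path_of_ne h₁.2.1 hv]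
    exact List.mem_cons_self
  exact InTree.snd_eq_of_mem_path hmem

theorem firstVar_mem_admissibleLabelings (hreach : ∀ v, ∃ m, par^[m] v = t)
    {tail : Fin k → Fin n} (htail : ∀ a j, arcVar E a = some j → tail j = a.1) :
    firstVar E par t ∈ admissibleLabelings t tail := by
  refine mem_admissibleLabelings.2 ⟨firstVar_root, fun v j hj => ?_⟩
  obtain ⟨a, ha, haj⟩ := List.mem_filterMap.1 (List.mem_of_mem_head? hj)
  have hat := InTree.fst_ne_root_of_mem_path ha
  have harc : (a.1, par a.1) = a := Prod.ext rfl (InTree.snd_eq_of_mem_path ha).symm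
  rw [htail a j haj, firstVar, pathVars_of_ne hreach hat, harc, haj]
  exact ⟨hat, rfl⟩

theorem ncard_isSPT_le_sum (hsep : SeparatedVars E) (hgen : Generic E P) (hP : ∃ x, P x) :
    {par | IsSPT E P t par}.ncard ≤
      ∑ i ∈ Finset.range (k + 1), k.choose i * (i + 1) ^ (n - i - 1) := by
  obtain ⟨tail, htail⟩ := SeparatedVars.exists_tail hsep t
  calc _ ≤ (admissibleLabelings t tail : Set (Fin n → Option (Fin k))).ncard :=
        Set.ncard_le_ncard_of_injOn (firstVar E · t)
          (fun _ h => firstVar_mem_admissibleLabelings h.2.1 htail)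
          (fun _ h₁ _ h₂ he => eq_of_firstVar_eq hsep hgen hP h₁ h₂ he)
          (Finset.finite_toSet _)
    _ ≤ _ := by simpa using card_admissibleLabelings_le t tail

theorem ncard_isSPT_le_pow : {par | IsSPT E P t par}.ncard ≤ n ^ (n - 2) := by
  calc _ ≤ {par : Fin n → Fin n | par t = t ∧ ∀ v, ∃ m, par^[m] v = t}.ncard :=
        Set.ncard_le_ncard (fun _ h => ⟨h.1, h.2.1⟩) (Set.toFinite _)
    _ ≤ _ := by simpa using InTree.ncard_le_card_pow t

theorem ncard_isSPT_le_choose {m : ℕ}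
    (hm : (Finset.univ.filter fun p : Fin n × Fin n => (E p.1 p.2).isSome).card = m) :
    {par | IsSPT E P t par}.ncard ≤ m.choose (n - 1) := by
  calc _ ≤ ((Finset.univ.filter fun p : Fin n × Fin n => (E p.1 p.2).isSome).powersetCard
          (n - 1) : Set (Finset (Fin n × Fin n))).ncard :=
        Set.ncard_le_ncard_of_injOn (InTree.treeArcs · t) (fun par h => ?_)
          (fun _ h₁ _ h₂ he => InTree.eq_of_treeArcs_eq h₁.1 h₂.1 he)
          (Finset.finite_toSet _)
    _ = _ := by rw [Set.ncard_coe_finset, Finset.card_powersetCard, hm]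
  refine Finset.mem_powersetCard.2 ⟨fun a ha => ?_, by simp [InTree.card_treeArcs]⟩
  obtain ⟨v, hv, rfl⟩ := Finset.mem_image.1 ha
  exact Finset.mem_filter.2 ⟨Finset.mem_univ _, h.2.2.1 v (Finset.ne_of_mem_erase hv)⟩

end ShortestPathTrees

theorem count_spt_main_general {n m k : ℕ}
    (E : Fin n → Fin n → Entry k) (t : Fin n)
    (lam : Fin k → ℝ) (mu : Fin k → WithTop ℝ)
    (hlm : ∀ i, (lam i : WithTop ℝ) ≤ mu i)
    (hm : (Finset.univ.filter fun p : Fin n × Fin n => (E p.1 p.2).isSome).card = m)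
    (hsep : SeparatedVars E)
    (hgen : Generic E fun x => ∀ i, lam i ≤ x i ∧ (x i : WithTop ℝ) ≤ mu i) :
    {par : Fin n → Fin n |
        IsSPT E (fun x => ∀ i, lam i ≤ x i ∧ (x i : WithTop ℝ) ≤ mu i) t par}.ncard ≤
      min (min (∑ i ∈ Finset.range (k + 1), Nat.choose k i * (i + 1) ^ (n - i - 1))
          (n ^ (n - 2)))
        (Nat.choose m (n - 1)) :=
  le_min (le_min (ncard_isSPT_le_sum hsep hgen ⟨lam, fun i => ⟨le_rfl, hlm i⟩⟩)
    ncard_isSPT_le_pow) (ncard_isSPT_le_choose hm)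

/-- for a generic weighted adjacency matrix with separated variables,
nonnegative weights, `m` arcs and variable bounds `λ_i ≤ x_i ≤ μ_i` in `[0,∞]`, the
number of shortest-path trees with target `t` is at most
`min(Φ(n,k), n^{n-2}, C(m, n-1))` where `Φ(n,k) = ∑_{i=0}^{k} C(k,i) (i+1)^{n-i-1}`. -/
theorem count_spt_main {n m k : ℕ}
    (E : Fin n → Fin n → Entry k) (t : Fin n)
    (lam : Fin k → ℝ) (mu : Fin k → WithTop ℝ)
    (hlam : ∀ i, 0 ≤ lam i) (hlm : ∀ i, (lam i : WithTop ℝ) ≤ mu i)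
    (hm : (Finset.univ.filter fun p : Fin n × Fin n => (E p.1 p.2).isSome).card = m)
    (hnonneg : ∀ (u v : Fin n) (c : ℝ) (o : Option (Fin k)), E u v = some (c, o) → 0 ≤ c)
    (hsep : SeparatedVars E)
    (hgen : Generic E fun x => ∀ i, lam i ≤ x i ∧ (x i : WithTop ℝ) ≤ mu i) :
    {par : Fin n → Fin n |
        IsSPT E (fun x => ∀ i, lam i ≤ x i ∧ (x i : WithTop ℝ) ≤ mu i) t par}.ncard ≤
      min (min (∑ i ∈ Finset.range (k + 1), Nat.choose k i * (i + 1) ^ (n - i - 1))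
          (n ^ (n - 2)))
        (Nat.choose m (n - 1)) :=
  count_spt_main_general E t lam mu hlm hm hsep hgen
end

section
/- For all natural numbers n and k, the function Φ(n,k) = Σ_{i=0}^{k} C(k,i) · (i+1)^{n−i−1} satisfies Φ(n,k) ≤ (k+1)^{n−1} · (1 + 1/(k+1))^{k} < e · (k+1)^{n−1}, where e is Euler's constant and C(k,i) denotes the binomial coefficient. -/
/-! Expanding `(1 + 1/(k+1))^k` binomially, `(k+1)^(n-1) (1 + 1/(k+1))^k` is the sum
`∑ C(k,i) (k+1)^(n-1-i)`, which dominates `Φ(n,k)` termwise since `i + 1 ≤ k + 1`.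
The strict bound by `e` comes from `(1 + 1/(k+1))^k < (1 + 1/(k+1))^(k+1) ≤ e`. -/

open Finset

theorem pow_mul_one_add_inv_pow_eq_sum {K : Type*} [Field K] {a : K} (ha : a ≠ 0) {k m : ℕ}
    (hkm : k ≤ m) :
    a ^ m * (1 + a⁻¹) ^ k = ∑ i ∈ range (k + 1), (k.choose i : K) * a ^ (m - i) := by
  rw [add_comm, add_pow, mul_sum]
  refine sum_congr rfl fun i hi => ?_
  rw [pow_sub₀ a ha ((mem_range_succ_iff.mp hi).trans hkm), inv_pow]
  ring

theorem one_add_inv_succ_pow_lt_exp_one (k : ℕ) : (1 + 1 / (k + 1 : ℝ)) ^ k < Real.exp 1 :=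
  calc (1 + 1 / (k + 1 : ℝ)) ^ k < (1 + 1 / (k + 1 : ℝ)) ^ (k + 1) :=
        pow_lt_pow_right₀ (lt_add_of_pos_right 1 (by positivity)) k.lt_succ_self
    _ ≤ Real.exp 1 := by
        simpa only [one_div, Nat.cast_succ] using Real.one_add_inv_pow_le_exp (n := k + 1)

/-- for `n ≥ k + 1`, the quantity
`Φ(n,k) = ∑_{i=0}^{k} C(k,i) (i+1)^{n-i-1}` satisfies
`Φ(n,k) ≤ (k+1)^{n-1} (1 + 1/(k+1))^k < e (k+1)^{n-1}`. -/
theorem phi_le_euler_bound (n k : ℕ) (hnk : k + 1 ≤ n) :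
    (∑ i ∈ Finset.range (k + 1), (Nat.choose k i : ℝ) * (i + 1) ^ (n - i - 1)) ≤
        (k + 1 : ℝ) ^ (n - 1) * (1 + 1 / (k + 1)) ^ k ∧
      (k + 1 : ℝ) ^ (n - 1) * (1 + 1 / (k + 1)) ^ k <
        Real.exp 1 * (k + 1 : ℝ) ^ (n - 1) := by
  refine ⟨?_, ?_⟩
  · rw [one_div, pow_mul_one_add_inv_pow_eq_sum (by positivity) (by omega : k ≤ n - 1)]
    refine sum_le_sum fun i hi => ?_
    have hik : (i + 1 : ℝ) ≤ k + 1 := by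
      exact_mod_cast Nat.succ_le_succ (mem_range_succ_iff.mp hi)
    rw [Nat.sub_right_comm]
    gcongr
  · rw [mul_comm]
    gcongr
    exact one_add_inv_succ_pow_lt_exp_one k
end
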